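/- arXiv:2108.02609 — 3 statements merged into one kernel-verified Lean document; each statement's English description precedes it below -/
import Mathlib

section
/- Let ν ∈ 𝒫₂(ℝ^d) and K ⊂ ℝ^d compact. Then the map μ ↦ W₂²(μ, ν) is strongly semiconcave with constant 1 on 𝒫(K): for all μ₁, μ₂ ∈ 𝒫(K), every coupling 𝛍 ∈ Γ(μ₁, μ₂), and every λ ∈ [0,1], defining the interpolation 𝛍^{1→2}_λ := ((1-λ)π¹ + λπ²)_#𝛍, one has (1-λ)·W₂²(μ₁,ν) + λ·W₂²(μ₂,ν) - W₂²(𝛍^{1→2}_λ, ν) ≤ λ(1-λ)·W_{2,𝛍}²(μ₁,μ₂), where W_{2,𝛍}²(μ₁,μ₂) = ∫ |x-y|² d𝛍(x,y). -/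
/-! Disintegrate a plan `γ` between `μ_λ := (T_λ)_# π` and `ν` along `T_λ(x, y) = (1-λ)x + λy`
and glue it to `π`: this gives a measure on triples `(x, y, w)` whose `(x, w)`- and
`(y, w)`-marginals couple `μ₁` and `μ₂` with `ν`. Integrating the Hilbert-space identity
`(1-λ)|x-w|² + λ|y-w|² = |T_λ(x, y) - w|² + λ(1-λ)|x-y|²` against it and taking the infimum
over `γ` gives the inequality in `ℝ≥0∞`. Compact support makes every second moment finite, so
the inequality survives the passage to real numbers. -/

open MeasureTheory Metric Set
open scoped ENNReal

/-- The set of transport plans (couplings) between two measures. -/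
def Coupling {α : Type*} [MeasurableSpace α] (μ ν : MeasureTheory.Measure α) :
    Set (MeasureTheory.Measure (α × α)) :=
  {γ | γ.map Prod.fst = μ ∧ γ.map Prod.snd = ν}

/-- The `p`-Wasserstein distance, defined as the infimum over transport plans of the
`p`-th root of the `p`-cost. -/
noncomputable def wassersteinDist {d : ℕ} (p : ℝ)
    (μ ν : MeasureTheory.Measure (EuclideanSpace ℝ (Fin d))) : ℝ≥0∞ :=
  ⨅ γ ∈ Coupling μ ν, (∫⁻ z, (edist z.1 z.2) ^ p ∂γ) ^ (1 / p)

open ProbabilityTheory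

lemma ENNReal.add_sq_le_two_mul (a b : ℝ≥0∞) : (a + b) ^ 2 ≤ 2 * (a ^ 2 + b ^ 2) := by
  have h := ENNReal.rpow_add_le_mul_rpow_add_rpow a b one_le_two
  norm_num [ENNReal.rpow_two] at h
  exact h

lemma ENNReal.iInf_rpow {ι : Sort*} (f : ι → ℝ≥0∞) {y : ℝ} (hy : 0 < y) :
    (⨅ i, f i) ^ y = ⨅ i, f i ^ y :=
  (ENNReal.orderIsoRpow y hy).map_iInf f

section Coupling

variable {α β Ω : Type*} [MeasurableSpace α] [MeasurableSpace β] [MeasurableSpace Ω]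

lemma isProbabilityMeasure_of_mem_coupling {μ ν : Measure α} [IsProbabilityMeasure ν]
    {γ : Measure (α × α)} (hγ : γ ∈ Coupling μ ν) : IsProbabilityMeasure γ := by
  have : IsProbabilityMeasure (γ.map Prod.snd) := hγ.2 ▸ ‹_›
  exact Measure.isProbabilityMeasure_of_map Prod.snd

lemma map_prodMap_mem_coupling {μ ν : Measure α} {m : Measure (β × α)} {f : β → α}
    (hf : Measurable f) (hm₁ : (m.map Prod.fst).map f = μ) (hm₂ : m.map Prod.snd = ν) :
    m.map (Prod.map f id) ∈ Coupling μ ν := by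
  constructor
  · rw [Measure.map_map measurable_fst (hf.prodMap measurable_id), ← hm₁,
      Measure.map_map hf measurable_fst]
    rfl
  · rw [Measure.map_map measurable_snd (hf.prodMap measurable_id), ← hm₂]
    rfl

lemma Measure.map_prodMap_compProd_comap (μ : Measure α) [SFinite μ] {g : α → β}
    (hg : Measurable g) (κ : Kernel β Ω) [IsSFiniteKernel κ] :
    (μ ⊗ₘ κ.comap g hg).map (Prod.map g id) = μ.map g ⊗ₘ κ := by
  ext s hs
  rw [Measure.map_apply (hg.prodMap measurable_id) hs,
    Measure.compProd_apply ((hg.prodMap measurable_id) hs), Measure.compProd_apply hs,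
    lintegral_map (Kernel.measurable_kernel_prodMk_left hs) hg]
  rfl

lemma Measure.exists_map_fst_eq_and_map_prodMap_eq [StandardBorelSpace Ω] [Nonempty Ω]
    (μ : Measure α) [SFinite μ] {g : α → β} (hg : Measurable g) (γ : Measure (β × Ω))
    [IsFiniteMeasure γ] (hγ : γ.map Prod.fst = μ.map g) :
    ∃ m : Measure (α × Ω), m.map Prod.fst = μ ∧ m.map (Prod.map g id) = γ := by
  refine ⟨μ ⊗ₘ γ.condKernel.comap g hg, Measure.fst_compProd μ _, ?_⟩
  rw [Measure.map_prodMap_compProd_comap μ hg, ← hγ]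
  exact γ.disintegrate γ.condKernel

end Coupling

lemma edist_sq_eq_ofReal {E : Type*} [SeminormedAddCommGroup E] (x y : E) :
    edist x y ^ 2 = ENNReal.ofReal (‖x - y‖ ^ 2) := by
  rw [edist_dist, dist_eq_norm, ENNReal.ofReal_pow (norm_nonneg _)]

section InnerProductSpace

variable {E : Type*} [NormedAddCommGroup E] [InnerProductSpace ℝ E]

lemma norm_smul_add_smul_sq (l : ℝ) (u v : E) :
    (1 - l) * ‖u‖ ^ 2 + l * ‖v‖ ^ 2 = ‖(1 - l) • u + l • v‖ ^ 2 + l * (1 - l) * ‖u - v‖ ^ 2 := by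
  rw [norm_add_sq_real, norm_sub_sq_real, norm_smul, norm_smul,
    real_inner_smul_left, real_inner_smul_right]
  simp only [mul_pow, Real.norm_eq_abs, sq_abs]
  ring

lemma edist_smul_add_smul_sq {l : ℝ} (hl0 : 0 ≤ l) (hl1 : l ≤ 1) (x y w : E) :
    ENNReal.ofReal (1 - l) * edist x w ^ 2 + ENNReal.ofReal l * edist y w ^ 2
      = edist ((1 - l) • x + l • y) w ^ 2 + ENNReal.ofReal (l * (1 - l)) * edist x y ^ 2 := by
  have h1l : 0 ≤ 1 - l := by linarith
  have hw : (1 - l) • x + l • y - w = (1 - l) • (x - w) + l • (y - w) := by module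
  have hxy : x - y = (x - w) - (y - w) := by abel
  simp only [edist_sq_eq_ofReal, ← ENNReal.ofReal_mul, h1l, hl0, mul_nonneg]
  rw [← ENNReal.ofReal_add (by positivity) (by positivity),
    ← ENNReal.ofReal_add (by positivity) (by positivity), hw, hxy, norm_smul_add_smul_sq]

end InnerProductSpace

section Transport

variable {E : Type*} [NormedAddCommGroup E] [MeasurableSpace E]

noncomputable def costSq (γ : Measure (E × E)) : ℝ≥0∞ := ∫⁻ z, edist z.1 z.2 ^ 2 ∂γ

noncomputable def wassersteinSq (μ ν : Measure E) : ℝ≥0∞ := ⨅ γ ∈ Coupling μ ν, costSq γ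

noncomputable def secondMoment (μ : Measure E) : ℝ≥0∞ := ∫⁻ x, ‖x‖ₑ ^ 2 ∂μ

lemma secondMoment_lt_top_of_isCompact {μ : Measure E} [IsFiniteMeasure μ] {K : Set E}
    (hK : IsCompact K) (hμK : μ Kᶜ = 0) : secondMoment μ < ⊤ := by
  obtain ⟨C, hC⟩ := hK.isBounded.exists_norm_le
  have hbound : ∀ᵐ x ∂μ, ‖x‖ₑ ^ 2 ≤ ENNReal.ofReal C ^ 2 := by
    filter_upwards [ae_iff.2 hμK] with x hx
    rw [← ofReal_norm]
    gcongr
    exact hC x hx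
  calc secondMoment μ ≤ ∫⁻ _, ENNReal.ofReal C ^ 2 ∂μ := lintegral_mono_ae hbound
    _ < ⊤ := by
      rw [lintegral_const]
      finiteness

variable [BorelSpace E] [SecondCountableTopology E]

lemma costSq_le_two_mul_secondMoment {μ ν : Measure E} {γ : Measure (E × E)}
    (hγ : γ ∈ Coupling μ ν) : costSq γ ≤ 2 * (secondMoment μ + secondMoment ν) := by
  have hpt : ∀ z : E × E, edist z.1 z.2 ^ 2 ≤ 2 * (‖z.1‖ₑ ^ 2 + ‖z.2‖ₑ ^ 2) := fun z =>
    (pow_le_pow_left₀ zero_le (edist_eq_enorm_sub z.1 z.2 ▸ enorm_sub_le) 2).trans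
      (ENNReal.add_sq_le_two_mul _ _)
  have hmom₁ : ∫⁻ z, ‖z.1‖ₑ ^ 2 ∂γ = secondMoment μ := by
    rw [secondMoment, ← hγ.1, lintegral_map (by fun_prop) measurable_fst]
  have hmom₂ : ∫⁻ z, ‖z.2‖ₑ ^ 2 ∂γ = secondMoment ν := by
    rw [secondMoment, ← hγ.2, lintegral_map (by fun_prop) measurable_snd]
  calc costSq γ ≤ ∫⁻ z, 2 * (‖z.1‖ₑ ^ 2 + ‖z.2‖ₑ ^ 2) ∂γ := lintegral_mono hpt
    _ = 2 * (secondMoment μ + secondMoment ν) := by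
      rw [lintegral_const_mul _ (by fun_prop), lintegral_add_left (by fun_prop), hmom₁, hmom₂]

lemma costSq_map_prodMap {β : Type*} [MeasurableSpace β] {m : Measure (β × E)} {f : β → E}
    (hf : Measurable f) : costSq (m.map (Prod.map f id)) = ∫⁻ p, edist (f p.1) p.2 ^ 2 ∂m := by
  rw [costSq, lintegral_map (by fun_prop) (hf.prodMap measurable_id)]
  rfl

lemma wassersteinSq_lt_top {μ ν : Measure E} [IsProbabilityMeasure μ] [IsProbabilityMeasure ν]
    (hμ : secondMoment μ < ⊤) (hν : secondMoment ν < ⊤) : wassersteinSq μ ν < ⊤ := by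
  have hprod : μ.prod ν ∈ Coupling μ ν := ⟨Measure.fst_prod, Measure.snd_prod⟩
  calc wassersteinSq μ ν ≤ costSq (μ.prod ν) := iInf₂_le _ hprod
    _ ≤ 2 * (secondMoment μ + secondMoment ν) := costSq_le_two_mul_secondMoment hprod
    _ < ⊤ := by finiteness

lemma integral_norm_sub_sq_eq_toReal_costSq (γ : Measure (E × E)) :
    ∫ z, ‖z.1 - z.2‖ ^ 2 ∂γ = (costSq γ).toReal := by
  rw [integral_eq_lintegral_of_nonneg_ae (ae_of_all _ fun z => sq_nonneg _)
    (by fun_prop), costSq]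
  simp only [edist_sq_eq_ofReal]

end Transport

section Interpolation

variable {E : Type*} [NormedAddCommGroup E] [InnerProductSpace ℝ E] [MeasurableSpace E]
  [BorelSpace E] [SecondCountableTopology E]

def convexComb (l : ℝ) (z : E × E) : E := (1 - l) • z.1 + l • z.2

lemma measurable_convexComb (l : ℝ) : Measurable (convexComb (E := E) l) := by
  unfold convexComb
  fun_prop

lemma secondMoment_map_convexComb_le {μ₁ μ₂ : Measure E} {π : Measure (E × E)}
    (hπ : π ∈ Coupling μ₁ μ₂) {l : ℝ} (hl0 : 0 ≤ l) (hl1 : l ≤ 1) :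
    secondMoment (π.map (convexComb l))
      ≤ ENNReal.ofReal (1 - l) * secondMoment μ₁ + ENNReal.ofReal l * secondMoment μ₂ := by
  have hpt : ∀ z : E × E, ‖convexComb l z‖ₑ ^ 2
      ≤ ENNReal.ofReal (1 - l) * ‖z.1‖ₑ ^ 2 + ENNReal.ofReal l * ‖z.2‖ₑ ^ 2 := fun z => by
    simp only [← edist_zero_right, edist_smul_add_smul_sq hl0 hl1 z.1 z.2 0, convexComb]
    exact le_self_add
  rw [secondMoment, lintegral_map (by fun_prop) (measurable_convexComb l), secondMoment,
    secondMoment, ← hπ.1, ← hπ.2, lintegral_map (by fun_prop) measurable_fst,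
    lintegral_map (by fun_prop) measurable_snd, ← lintegral_const_mul _ (by fun_prop),
    ← lintegral_const_mul _ (by fun_prop), ← lintegral_add_left (by fun_prop)]
  exact lintegral_mono hpt

variable [CompleteSpace E]

lemma ofReal_mul_wassersteinSq_add_le_costSq_add {μ₁ μ₂ ν : Measure E} [IsProbabilityMeasure ν]
    {π : Measure (E × E)} [SFinite π] (hπ : π ∈ Coupling μ₁ μ₂) {l : ℝ} (hl0 : 0 ≤ l)
    (hl1 : l ≤ 1) {γ : Measure (E × E)} (hγ : γ ∈ Coupling (π.map (convexComb l)) ν) :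
    ENNReal.ofReal (1 - l) * wassersteinSq μ₁ ν + ENNReal.ofReal l * wassersteinSq μ₂ ν
      ≤ costSq γ + ENNReal.ofReal (l * (1 - l)) * costSq π := by
  have hT := measurable_convexComb (E := E) l
  have := isProbabilityMeasure_of_mem_coupling hγ
  obtain ⟨m, hm_fst, hm_T⟩ := Measure.exists_map_fst_eq_and_map_prodMap_eq π hT γ hγ.1
  have hm_snd : m.map Prod.snd = ν := by
    rw [← hγ.2, ← hm_T, Measure.map_map measurable_snd (hT.prodMap measurable_id)]
    rfl
  have h₁ : m.map (Prod.map Prod.fst id) ∈ Coupling μ₁ ν :=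
    map_prodMap_mem_coupling measurable_fst (by rw [hm_fst, hπ.1]) hm_snd
  have h₂ : m.map (Prod.map Prod.snd id) ∈ Coupling μ₂ ν :=
    map_prodMap_mem_coupling measurable_snd (by rw [hm_fst, hπ.2]) hm_snd
  have hπ_cost : costSq π = ∫⁻ p, edist p.1.1 p.1.2 ^ 2 ∂m := by
    rw [costSq, ← hm_fst, lintegral_map (by fun_prop) measurable_fst]
  calc ENNReal.ofReal (1 - l) * wassersteinSq μ₁ ν + ENNReal.ofReal l * wassersteinSq μ₂ ν
      ≤ ENNReal.ofReal (1 - l) * costSq (m.map (Prod.map Prod.fst id))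
        + ENNReal.ofReal l * costSq (m.map (Prod.map Prod.snd id)) := by
        gcongr
        exacts [iInf₂_le _ h₁, iInf₂_le _ h₂]
    _ = ∫⁻ p, (ENNReal.ofReal (1 - l) * edist p.1.1 p.2 ^ 2
          + ENNReal.ofReal l * edist p.1.2 p.2 ^ 2) ∂m := by
        rw [costSq_map_prodMap measurable_fst, costSq_map_prodMap measurable_snd,
          lintegral_add_left (by fun_prop), lintegral_const_mul _ (by fun_prop),
          lintegral_const_mul _ (by fun_prop)]
    _ = ∫⁻ p, (edist (convexComb l p.1) p.2 ^ 2
          + ENNReal.ofReal (l * (1 - l)) * edist p.1.1 p.1.2 ^ 2) ∂m :=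
        lintegral_congr fun p => edist_smul_add_smul_sq hl0 hl1 p.1.1 p.1.2 p.2
    _ = costSq γ + ENNReal.ofReal (l * (1 - l)) * costSq π := by
        rw [lintegral_add_left (by fun_prop), lintegral_const_mul _ (by fun_prop), ← hm_T,
          costSq_map_prodMap hT, hπ_cost]

lemma ofReal_mul_wassersteinSq_add_le_wassersteinSq_add {μ₁ μ₂ ν : Measure E}
    [IsProbabilityMeasure ν] {π : Measure (E × E)} [SFinite π] (hπ : π ∈ Coupling μ₁ μ₂)
    {l : ℝ} (hl0 : 0 ≤ l) (hl1 : l ≤ 1) :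
    ENNReal.ofReal (1 - l) * wassersteinSq μ₁ ν + ENNReal.ofReal l * wassersteinSq μ₂ ν
      ≤ wassersteinSq (π.map (convexComb l)) ν + ENNReal.ofReal (l * (1 - l)) * costSq π := by
  simp only [wassersteinSq, ENNReal.iInf_add]
  exact le_iInf₂ fun γ hγ => ofReal_mul_wassersteinSq_add_le_costSq_add hπ hl0 hl1 hγ

lemma toReal_wassersteinSq_add_le {μ₁ μ₂ ν : Measure E} [IsProbabilityMeasure ν]
    {π : Measure (E × E)} [SFinite π] (hπ : π ∈ Coupling μ₁ μ₂) {l : ℝ}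
    (hl0 : 0 ≤ l) (hl1 : l ≤ 1) (hW : wassersteinSq (π.map (convexComb l)) ν ≠ ⊤)
    (hC : costSq π ≠ ⊤) :
    (1 - l) * (wassersteinSq μ₁ ν).toReal + l * (wassersteinSq μ₂ ν).toReal
      ≤ (wassersteinSq (π.map (convexComb l)) ν).toReal + l * (1 - l) * (costSq π).toReal := by
  have h := ofReal_mul_wassersteinSq_add_le_wassersteinSq_add (ν := ν) hπ hl0 hl1
  have hR : wassersteinSq (π.map (convexComb l)) ν + ENNReal.ofReal (l * (1 - l)) * costSq π
      ≠ ⊤ := by finiteness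
  have hL := ENNReal.add_ne_top.1 (h.trans_lt hR.lt_top).ne
  have hreal := ENNReal.toReal_mono hR h
  rwa [ENNReal.toReal_add hL.1 hL.2, ENNReal.toReal_add hW (by finiteness), ENNReal.toReal_mul,
    ENNReal.toReal_mul, ENNReal.toReal_mul, ENNReal.toReal_ofReal (by linarith),
    ENNReal.toReal_ofReal hl0, ENNReal.toReal_ofReal (by nlinarith)] at hreal

end Interpolation

lemma wassersteinDist_two_eq_rpow {d : ℕ} (μ ν : Measure (EuclideanSpace ℝ (Fin d))) :
    wassersteinDist 2 μ ν = wassersteinSq μ ν ^ (1 / 2 : ℝ) := by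
  simp only [wassersteinDist, wassersteinSq, costSq, ENNReal.rpow_two,
    ENNReal.iInf_rpow _ one_half_pos]

lemma toReal_wassersteinDist_two_sq {d : ℕ} (μ ν : Measure (EuclideanSpace ℝ (Fin d))) :
    (wassersteinDist 2 μ ν).toReal ^ 2 = (wassersteinSq μ ν).toReal := by
  rw [wassersteinDist_two_eq_rpow, ← ENNReal.toReal_rpow, ← Real.sqrt_eq_rpow,
    Real.sq_sqrt ENNReal.toReal_nonneg]

/-- Strong semiconcavity (with constant 1) of `μ ↦ W₂²(μ, ν)` along arbitrary
interpolating curves induced by transport plans. -/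
theorem stmt6 {d : ℕ} (ν : MeasureTheory.Measure (EuclideanSpace ℝ (Fin d)))
    [IsProbabilityMeasure ν]
    (hν2 : ∫⁻ x, (‖x‖₊ : ℝ≥0∞) ^ (2 : ℝ) ∂ν ≠ ⊤)
    (K : Set (EuclideanSpace ℝ (Fin d))) (hK : IsCompact K)
    (μ₁ μ₂ : MeasureTheory.Measure (EuclideanSpace ℝ (Fin d)))
    [IsProbabilityMeasure μ₁] [IsProbabilityMeasure μ₂]
    (h1 : μ₁ Kᶜ = 0) (h2 : μ₂ Kᶜ = 0)
    (π : MeasureTheory.Measure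
      (EuclideanSpace ℝ (Fin d) × EuclideanSpace ℝ (Fin d)))
    [IsProbabilityMeasure π] (hπ : π ∈ Coupling μ₁ μ₂)
    (l : ℝ) (hl : l ∈ Icc (0 : ℝ) 1) :
    (1 - l) * ((wassersteinDist 2 μ₁ ν).toReal) ^ 2
      + l * ((wassersteinDist 2 μ₂ ν).toReal) ^ 2
      - ((wassersteinDist 2 (π.map (fun z => (1 - l) • z.1 + l • z.2)) ν).toReal) ^ 2
      ≤ l * (1 - l) * ∫ z, ‖z.1 - z.2‖ ^ 2 ∂π := by
  obtain ⟨hl0, hl1⟩ := hl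
  have hm₁ := secondMoment_lt_top_of_isCompact hK h1
  have hm₂ := secondMoment_lt_top_of_isCompact hK h2
  have hmν : secondMoment ν < ⊤ := by
    simpa [secondMoment, enorm_eq_nnnorm, ENNReal.rpow_two, lt_top_iff_ne_top] using hν2
  have := Measure.isProbabilityMeasure_map (μ := π) (measurable_convexComb l).aemeasurable
  have hW : wassersteinSq (π.map (convexComb l)) ν ≠ ⊤ :=
    (wassersteinSq_lt_top ((secondMoment_map_convexComb_le hπ hl0 hl1).trans_lt
      (by finiteness)) hmν).ne
  have hC : costSq π ≠ ⊤ := ((costSq_le_two_mul_secondMoment hπ).trans_lt (by finiteness)).ne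
  have key := toReal_wassersteinSq_add_le hπ hl0 hl1 hW hC
  rw [toReal_wassersteinDist_two_sq, toReal_wassersteinDist_two_sq,
    toReal_wassersteinDist_two_sq, integral_norm_sub_sq_eq_toReal_costSq]
  unfold convexComb at key
  linarith
end

section
/- Let φ : 𝒫_c(ℝ^d) → ℝ be locally strongly semiconcave, μ a compactly supported Borel probability measure on ℝ^d, and F ∈ L^∞(ℝ^d, ℝ^d; μ). Then the directional (Dini) derivative dφ(μ)(F) := lim_{ε→0⁺} [φ((Id + εF)_#μ) − φ(μ)]/ε exists in ℝ. Moreover, for 0 < ε₁ ≤ ε₂ ≤ 1 the difference quotients satisfy [φ((Id+ε₁F)_#μ) − φ(μ)]/ε₁ ≥ [φ((Id+ε₂F)_#μ) − φ(μ)]/ε₂ − C_K(ε₂−ε₁)‖F‖_{L²(μ)} for some constant C_K depending only on a compact set K containing the supports of all (Id+εF)_#μ for ε ∈ [0,1]. -/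
open MeasureTheory Metric Set Filter

/-! Put `I = ‖F‖²_{L²(μ)}` and `g t = φ ((Id + tF)_#μ)`. For `a, b ∈ [-1, 1]` the coupling
`(Id + aF, Id + bF)_#μ` interpolates along the curve,
`(1 - l)(Id + aF) + l(Id + bF) = Id + ((1 - l)a + lb)F`, and has cost `(b - a)² I`; all these
measures live in one ball, so semiconcavity of `φ` makes `t ↦ g t - C I t²` concave on `[-1, 1]`.
Slopes of a concave function from `0` are antitone, which is the almost monotonicity of the
difference quotients (with error `C I (ε₂ - ε₁)`), and a concave function has a right derivative
at the interior point `0`, which gives the limit. -/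

-- `(1 - l) a² + l b² - ((1 - l) a + l b)² = l (1 - l) (b - a)²`
lemma concaveOn_sub_mul_sq_of_semiconcave {g : ℝ → ℝ} {s : Set ℝ} (hs : Convex ℝ s) {c : ℝ}
    (hg : ∀ a ∈ s, ∀ b ∈ s, ∀ l ∈ Icc (0 : ℝ) 1,
      (1 - l) * g a + l * g b - g ((1 - l) * a + l * b) ≤ c * (l * (1 - l)) * (b - a) ^ 2) :
    ConcaveOn ℝ s fun t => g t - c * t ^ 2 := by
  refine ⟨hs, fun a ha b hb p q hp hq hpq => ?_⟩
  obtain rfl : p = 1 - q := by linarith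
  have := hg a ha b hb q ⟨hq, by linarith⟩
  simp only [smul_eq_mul] at this ⊢
  linear_combination this

lemma slope_sub_mul_sq (g : ℝ → ℝ) (c : ℝ) {x y : ℝ} (hxy : x ≠ y) :
    slope (fun t => g t - c * t ^ 2) x y = slope g x y - c * (x + y) := by
  have : y - x ≠ 0 := sub_ne_zero.2 hxy.symm
  simp only [slope_def_field]
  field_simp
  ring

lemma slope_le_slope_add_of_concaveOn_sub_mul_sq {g : ℝ → ℝ} {s : Set ℝ} {c x y z : ℝ}
    (hg : ConcaveOn ℝ s fun t => g t - c * t ^ 2) (hx : x ∈ s) (hy : y ∈ s) (hz : z ∈ s)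
    (hxy : x < y) (hyz : y ≤ z) :
    slope g x z ≤ slope g x y + c * (z - y) := by
  have := hg.antitoneOn_slope_gt hx ⟨hy, hxy⟩ ⟨hz, hxy.trans_le hyz⟩ hyz
  rw [slope_sub_mul_sq g c hxy.ne, slope_sub_mul_sq g c (hxy.trans_le hyz).ne] at this
  linarith

lemma differentiableWithinAt_Ioi_of_concaveOn_sub_mul_sq {g : ℝ → ℝ} {s : Set ℝ} {c x : ℝ}
    (hg : ConcaveOn ℝ s fun t => g t - c * t ^ 2) (hx : x ∈ interior s) :
    DifferentiableWithinAt ℝ g (Ioi x) x := by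
  have hd : DifferentiableWithinAt ℝ (fun t => g t - c * t ^ 2) (Ioi x) x := by
    simpa using (hg.neg.differentiableWithinAt_Ioi_of_mem_interior hx).neg
  have hg_eq : g = fun t => (g t - c * t ^ 2) + c * t ^ 2 := by simp
  rw [hg_eq]
  exact hd.add (by fun_prop)

section Transport

variable {E : Type*} [NormedAddCommGroup E] [NormedSpace ℝ E] [MeasurableSpace E] [BorelSpace E]
  [SecondCountableTopology E] {μ : Measure E} {F : E → E}

def IsSemiconcaveOnClosedBall (φ : Measure E → ℝ) (R C : ℝ) : Prop :=
  ∀ μ₁ μ₂ : Measure E, IsProbabilityMeasure μ₁ → IsProbabilityMeasure μ₂ →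
    μ₁ (closedBall 0 R)ᶜ = 0 → μ₂ (closedBall 0 R)ᶜ = 0 →
    ∀ π : Measure (E × E), IsProbabilityMeasure π →
      π.map Prod.fst = μ₁ → π.map Prod.snd = μ₂ →
      ∀ l ∈ Icc (0 : ℝ) 1,
        (1 - l) * φ μ₁ + l * φ μ₂ - φ (π.map (fun z => (1 - l) • z.1 + l • z.2))
          ≤ C * (l * (1 - l)) * ∫ z, ‖z.1 - z.2‖ ^ 2 ∂π

lemma map_add_smul_compl_closedBall {R M t : ℝ} (hF : Measurable F) (hμ : μ (closedBall 0 R)ᶜ = 0)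
    (hFM : ∀ x, ‖F x‖ ≤ M) (ht : |t| ≤ 1) :
    (μ.map fun x => x + t • F x) (closedBall 0 (R + M))ᶜ = 0 := by
  rw [Measure.map_apply (by fun_prop) measurableSet_closedBall.compl, preimage_compl]
  refine measure_mono_null (compl_subset_compl.2 fun x hxR => ?_) hμ
  rw [mem_closedBall_zero_iff] at hxR
  rw [mem_preimage, mem_closedBall_zero_iff]
  calc ‖x + t • F x‖ ≤ ‖x‖ + |t| * ‖F x‖ := by
        simpa [norm_smul] using norm_add_le x (t • F x)
    _ ≤ R + 1 * M := add_le_add hxR (mul_le_mul ht (hFM x) (norm_nonneg _) zero_le_one)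
    _ = R + M := by ring

section Coupling

variable (μ F) (a b : ℝ)

noncomputable def lineCoupling : Measure (E × E) := μ.map fun x => (x + a • F x, x + b • F x)

variable {μ F}

lemma lineCoupling_map_fst (hF : Measurable F) :
    (lineCoupling μ F a b).map Prod.fst = μ.map fun x => x + a • F x := by
  rw [lineCoupling, Measure.map_map measurable_fst (by fun_prop)]
  rfl

lemma lineCoupling_map_snd (hF : Measurable F) :
    (lineCoupling μ F a b).map Prod.snd = μ.map fun x => x + b • F x := by
  rw [lineCoupling, Measure.map_map measurable_snd (by fun_prop)]
  rfl

lemma lineCoupling_map_interpolate (hF : Measurable F) (l : ℝ) :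
    (lineCoupling μ F a b).map (fun z => (1 - l) • z.1 + l • z.2)
      = μ.map fun x => x + ((1 - l) * a + l * b) • F x := by
  rw [lineCoupling, Measure.map_map (by fun_prop) (by fun_prop)]
  congr 1
  ext x
  simp only [Function.comp_apply]
  module

lemma integral_sq_dist_lineCoupling (hF : Measurable F) :
    ∫ z, ‖z.1 - z.2‖ ^ 2 ∂(lineCoupling μ F a b) = (b - a) ^ 2 * ∫ x, ‖F x‖ ^ 2 ∂μ := by
  rw [lineCoupling, integral_map (by fun_prop) (by fun_prop), ← integral_const_mul]
  congr 1
  ext x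
  rw [add_sub_add_left_eq_sub, ← sub_smul, norm_smul, mul_pow, Real.norm_eq_abs, sq_abs]
  ring

end Coupling

lemma IsSemiconcaveOnClosedBall.concaveOn_map_add_smul [IsProbabilityMeasure μ]
    {φ : Measure E → ℝ} {R M C : ℝ} (hφ : IsSemiconcaveOnClosedBall φ (R + M) C)
    (hF : Measurable F) (hμ : μ (closedBall 0 R)ᶜ = 0) (hFM : ∀ x, ‖F x‖ ≤ M) :
    ConcaveOn ℝ (Icc (-1) 1) fun t =>
      φ (μ.map fun x => x + t • F x) - C * (∫ x, ‖F x‖ ^ 2 ∂μ) * t ^ 2 := by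
  refine concaveOn_sub_mul_sq_of_semiconcave (convex_Icc _ _) fun a ha b hb l hl => ?_
  have hsupp : ∀ t ∈ Icc (-1 : ℝ) 1, (μ.map fun x => x + t • F x) (closedBall 0 (R + M))ᶜ = 0 :=
    fun t ht => map_add_smul_compl_closedBall hF hμ hFM (abs_le.2 ht)
  have := hφ _ _ (Measure.isProbabilityMeasure_map (by fun_prop))
    (Measure.isProbabilityMeasure_map (by fun_prop)) (hsupp a ha) (hsupp b hb)
    (lineCoupling μ F a b) (Measure.isProbabilityMeasure_map (by fun_prop))
    (lineCoupling_map_fst a b hF) (lineCoupling_map_snd a b hF) l hl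
  rw [lineCoupling_map_interpolate a b hF, integral_sq_dist_lineCoupling a b hF] at this
  linarith

end Transport

/-- For a locally strongly semiconcave functional on measures, the one-sided directional
(Dini) derivative along a bounded vector field exists, and the difference quotients are
almost monotone. -/
theorem stmt14 {d : ℕ} (φ : MeasureTheory.Measure (EuclideanSpace ℝ (Fin d)) → ℝ)
    (hsc : ∀ R : ℝ, 0 < R → ∃ C : ℝ, 0 < C ∧
      ∀ μ₁ μ₂ : MeasureTheory.Measure (EuclideanSpace ℝ (Fin d)),
        IsProbabilityMeasure μ₁ → IsProbabilityMeasure μ₂ →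
        μ₁ (closedBall 0 R)ᶜ = 0 → μ₂ (closedBall 0 R)ᶜ = 0 →
        ∀ π : MeasureTheory.Measure
          (EuclideanSpace ℝ (Fin d) × EuclideanSpace ℝ (Fin d)),
          IsProbabilityMeasure π →
          π.map Prod.fst = μ₁ → π.map Prod.snd = μ₂ →
          ∀ l ∈ Icc (0 : ℝ) 1,
            (1 - l) * φ μ₁ + l * φ μ₂
              - φ (π.map (fun z => (1 - l) • z.1 + l • z.2))
              ≤ C * (l * (1 - l)) * ∫ z, ‖z.1 - z.2‖ ^ 2 ∂π)
    (μ : MeasureTheory.Measure (EuclideanSpace ℝ (Fin d))) [IsProbabilityMeasure μ]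
    (K : Set (EuclideanSpace ℝ (Fin d))) (hK : IsCompact K) (hμ : μ Kᶜ = 0)
    (F : EuclideanSpace ℝ (Fin d) → EuclideanSpace ℝ (Fin d))
    (hF : Measurable F) (M : ℝ) (hFb : ∀ x, ‖F x‖ ≤ M) :
    (∃ D : ℝ, Tendsto
      (fun ε : ℝ => (φ (μ.map (fun x => x + ε • F x)) - φ μ) / ε)
      (nhdsWithin 0 (Ioi 0)) (nhds D)) ∧
    (∃ C : ℝ, ∀ ε₁ ε₂ : ℝ, 0 < ε₁ → ε₁ ≤ ε₂ → ε₂ ≤ 1 →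
      (φ (μ.map (fun x => x + ε₁ • F x)) - φ μ) / ε₁ ≥
        (φ (μ.map (fun x => x + ε₂ • F x)) - φ μ) / ε₂
          - C * (ε₂ - ε₁) * Real.sqrt (∫ x, ‖F x‖ ^ 2 ∂μ)) := by
  obtain ⟨R, hR, hKR⟩ := hK.isBounded.subset_closedBall_lt 0 0
  have hμR : μ (closedBall 0 R)ᶜ = 0 := measure_mono_null (compl_subset_compl.2 hKR) hμ
  have hM : 0 ≤ M := (norm_nonneg _).trans (hFb 0)
  obtain ⟨C, -, hC⟩ := hsc (R + M) (by positivity)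
  set I := ∫ x, ‖F x‖ ^ 2 ∂μ
  set g : ℝ → ℝ := fun t => φ (μ.map fun x => x + t • F x)
  have hconc : ConcaveOn ℝ (Icc (-1) 1) fun t => g t - C * I * t ^ 2 :=
    IsSemiconcaveOnClosedBall.concaveOn_map_add_smul hC hF hμR hFb
  have hslope : slope g 0 = fun t => (φ (μ.map fun x => x + t • F x) - φ μ) / t := by
    ext t
    simp [g, slope_def_field, Measure.map_id']
  constructor
  · have hd := differentiableWithinAt_Ioi_of_concaveOn_sub_mul_sq hconc
      (x := 0) (by rw [interior_Icc]; norm_num)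
    exact ⟨_, hslope ▸
      (hasDerivWithinAt_iff_tendsto_slope' self_notMem_Ioi).1 hd.hasDerivWithinAt⟩
  · refine ⟨C * √I, fun ε₁ ε₂ h₁ h₁₂ h₂ => ?_⟩
    have hquot := slope_le_slope_add_of_concaveOn_sub_mul_sq hconc (by simp)
      ⟨by linarith, by linarith⟩ ⟨by linarith, h₂⟩ h₁ h₁₂
    simp only [hslope] at hquot
    have hI : √I * √I = I := Real.mul_self_sqrt (integral_nonneg fun x => sq_nonneg _)
    linear_combination hquot - C * (ε₂ - ε₁) * hI
end

section
/- Let H : [0,T] × ℝ^d → ℝ^d be measurable in t, C¹ in x, with |H(t,0)| + Lip(D_x H(t,·); K) ≤ C_K(t) for some C_K ∈ L¹([0,T],ℝ₊) and every closed ball K = B̄(0,R). Define the convolution-type non-local field v(t,μ,x) := ∫ H(t, x − z) dμ(z). Then for a.e. t ∈ [0,T], all μ₁, μ₂ ∈ 𝒫(K), all couplings 𝛍 ∈ Γ(μ₁,μ₂), all x, y ∈ K and all λ ∈ [0,1], |(1-λ)v(t,μ₁,x) + λv(t,μ₂,y) − v(t, 𝛍^{1→2}_λ, (1-λ)x + λy)|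 ≤ 2C_K(t)·λ(1-λ)·(|x−y|² + ∫|z₁−z₂|² d𝛍(z₁,z₂)), where 𝛍^{1→2}_λ := ((1-λ)π¹ + λπ²)_#𝛍. -/
/-!
Fix a coupling `π` of `μ₁, μ₂`. Both `v(t, μᵢ, ·)` at `x`, `y` and the field of the interpolated
measure at the interpolated point are integrals over `π` of `H t` evaluated at `a = x - z₁`,
`b = y - z₂` and at `(1 - l) a + l b` respectively. For `a, b` in the ball of radius `2R`, a
Lipschitz derivative makes `H t` semiconcave there, with defect `CK t · l (1 - l) ‖a - b‖²`, and
`‖a - b‖² ≤ 2 (‖x - y‖² + ‖z₁ - z₂‖²)`; integrating this against `π` gives the claim.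
-/

open MeasureTheory Metric Set

theorem norm_sub_sub_sub_sq_le {E : Type*} [SeminormedAddCommGroup E] (x y u v : E) :
    ‖(x - u) - (y - v)‖ ^ 2 ≤ 2 * (‖x - y‖ ^ 2 + ‖u - v‖ ^ 2) := by
  have hnorm : ‖(x - u) - (y - v)‖ ≤ ‖x - y‖ + ‖u - v‖ := by
    rw [show (x - u) - (y - v) = (x - y) - (u - v) by abel]
    exact norm_sub_le _ _
  calc _ ≤ (‖x - y‖ + ‖u - v‖) ^ 2 := by gcongr
    _ ≤ _ := add_sq_le

section Semiconcavity

variable {E F : Type*} [NormedAddCommGroup E] [NormedSpace ℝ E]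
  [NormedAddCommGroup F] [NormedSpace ℝ F]
  {f : E → F} {s : Set E} {C : ℝ}

theorem Convex.norm_sub_sub_fderiv_le_of_lipschitz_fderiv (hs : Convex ℝ s)
    (hf : ∀ z ∈ s, DifferentiableAt ℝ f z) (hC0 : 0 ≤ C)
    (hC : ∀ a ∈ s, ∀ b ∈ s, ‖fderiv ℝ f a - fderiv ℝ f b‖ ≤ C * ‖a - b‖)
    {m a : E} (hm : m ∈ s) (ha : a ∈ s) :
    ‖f a - f m - fderiv ℝ f m (a - m)‖ ≤ C * ‖a - m‖ ^ 2 := by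
  -- the mean value inequality for `z ↦ f z - f' m z` on `s ∩ closedBall m ‖a - m‖`
  set s' := s ∩ closedBall m ‖a - m‖
  have hder : ∀ z ∈ s', HasFDerivWithinAt (fun z => f z - fderiv ℝ f m z)
      (fderiv ℝ f z - fderiv ℝ f m) s' z := fun z hz =>
    ((hf z hz.1).hasFDerivAt.sub (fderiv ℝ f m).hasFDerivAt).hasFDerivWithinAt
  have hbound : ∀ z ∈ s', ‖fderiv ℝ f z - fderiv ℝ f m‖ ≤ C * ‖a - m‖ := fun z hz =>
    (hC z hz.1 m hm).trans <| by
      gcongr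
      simpa [dist_eq_norm] using hz.2
  have hmvt := (hs.inter (convex_closedBall _ _)).norm_image_sub_le_of_norm_hasFDerivWithin_le
    hder hbound ⟨hm, mem_closedBall_self (norm_nonneg _)⟩ ⟨ha, by simp [dist_eq_norm]⟩
  calc ‖f a - f m - fderiv ℝ f m (a - m)‖
      = ‖(f a - fderiv ℝ f m a) - (f m - fderiv ℝ f m m)‖ := by
        rw [map_sub]; congr 1; abel
    _ ≤ C * ‖a - m‖ * ‖a - m‖ := hmvt
    _ = C * ‖a - m‖ ^ 2 := by ring

theorem Convex.norm_convexCombo_sub_le_of_lipschitz_fderiv (hs : Convex ℝ s)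
    (hf : ∀ z ∈ s, DifferentiableAt ℝ f z) (hC0 : 0 ≤ C)
    (hC : ∀ a ∈ s, ∀ b ∈ s, ‖fderiv ℝ f a - fderiv ℝ f b‖ ≤ C * ‖a - b‖)
    {a b : E} (ha : a ∈ s) (hb : b ∈ s) {l : ℝ} (hl0 : 0 ≤ l) (hl1 : l ≤ 1) :
    ‖(1 - l) • f a + l • f b - f ((1 - l) • a + l • b)‖
      ≤ C * (l * (1 - l)) * ‖a - b‖ ^ 2 := by
  set m := (1 - l) • a + l • b
  have hm : m ∈ s := hs ha hb (by linarith) hl0 (by ring)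
  have ham : a - m = l • (a - b) := by module
  have hbm : b - m = (1 - l) • (b - a) := by module
  -- the first-order terms cancel since `(1 - l) (a - m) + l (b - m) = 0`
  have hsplit : (1 - l) • f a + l • f b - f m
      = (1 - l) • (f a - f m - fderiv ℝ f m (a - m))
        + l • (f b - f m - fderiv ℝ f m (b - m)) := by
    rw [ham, hbm, map_smul, map_smul, ← neg_sub a b, map_neg]
    module
  rw [hsplit]
  calc _ ≤ (1 - l) * ‖f a - f m - fderiv ℝ f m (a - m)‖
        + l * ‖f b - f m - fderiv ℝ f m (b - m)‖ := by
        refine (norm_add_le _ _).trans_eq ?_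
        rw [norm_smul_of_nonneg (by linarith), norm_smul_of_nonneg hl0]
    _ ≤ (1 - l) * (C * ‖a - m‖ ^ 2) + l * (C * ‖b - m‖ ^ 2) := by
        have hl1' : 0 ≤ 1 - l := by linarith
        gcongr
        · exact hs.norm_sub_sub_fderiv_le_of_lipschitz_fderiv hf hC0 hC hm ha
        · exact hs.norm_sub_sub_fderiv_le_of_lipschitz_fderiv hf hC0 hC hm hb
    _ = C * (l * (1 - l)) * ‖a - b‖ ^ 2 := by
        rw [ham, hbm, norm_smul_of_nonneg hl0, norm_smul_of_nonneg (by linarith),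
          norm_sub_rev b a]
        ring

theorem Convex.norm_convexCombo_sub_sub_le_of_lipschitz_fderiv (hs : Convex ℝ s)
    (hf : ∀ z ∈ s, DifferentiableAt ℝ f z) (hC0 : 0 ≤ C)
    (hC : ∀ a ∈ s, ∀ b ∈ s, ‖fderiv ℝ f a - fderiv ℝ f b‖ ≤ C * ‖a - b‖)
    {x y u v : E} (hxu : x - u ∈ s) (hyv : y - v ∈ s) {l : ℝ} (hl0 : 0 ≤ l) (hl1 : l ≤ 1) :
    ‖(1 - l) • f (x - u) + l • f (y - v) - f ((1 - l) • (x - u) + l • (y - v))‖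
      ≤ 2 * C * (l * (1 - l)) * (‖x - y‖ ^ 2 + ‖u - v‖ ^ 2) := by
  have : 0 ≤ l * (1 - l) := mul_nonneg hl0 (by linarith)
  calc _ ≤ C * (l * (1 - l)) * ‖(x - u) - (y - v)‖ ^ 2 :=
        hs.norm_convexCombo_sub_le_of_lipschitz_fderiv hf hC0 hC hxu hyv hl0 hl1
    _ ≤ C * (l * (1 - l)) * (2 * (‖x - y‖ ^ 2 + ‖u - v‖ ^ 2)) := by
        gcongr
        exact norm_sub_sub_sub_sq_le x y u v
    _ = _ := by ring

end Semiconcavity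

theorem Continuous.integrable_comp_of_ae_mem_isCompact {α E F : Type*} [MeasurableSpace α]
    [TopologicalSpace E] [NormedAddCommGroup F] {μ : Measure α} [IsFiniteMeasure μ]
    {f : E → F} (hf : Continuous f) {K : Set E} (hK : IsCompact K) {g : α → E}
    (hg : AEStronglyMeasurable g μ) (hgK : ∀ᵐ q ∂μ, g q ∈ K) :
    Integrable (fun q => f (g q)) μ := by
  obtain ⟨M, hM⟩ := hK.exists_bound_of_continuousOn hf.continuousOn
  exact .of_bound (hf.comp_aestronglyMeasurable hg) M (hgK.mono fun q hq => hM _ hq)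

theorem norm_convexCombo_integral_sub_le {α F : Type*} [MeasurableSpace α]
    [NormedAddCommGroup F] [NormedSpace ℝ F] {μ : Measure α} {f g h : α → F} {G : α → ℝ}
    (hf : Integrable f μ) (hg : Integrable g μ) (hh : Integrable h μ) (hG : Integrable G μ)
    (l : ℝ) (hbound : ∀ᵐ q ∂μ, ‖(1 - l) • f q + l • g q - h q‖ ≤ G q) :
    ‖(1 - l) • ∫ q, f q ∂μ + l • ∫ q, g q ∂μ - ∫ q, h q ∂μ‖ ≤ ∫ q, G q ∂μ := by
  have hf' : Integrable (fun q => (1 - l) • f q) μ := hf.smul _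
  have hg' : Integrable (fun q => l • g q) μ := hg.smul _
  have hfg : Integrable (fun q => (1 - l) • f q + l • g q) μ := hf'.add hg'
  rw [← integral_smul, ← integral_smul, ← integral_add hf' hg', ← integral_sub hfg hh]
  exact norm_integral_le_of_norm_le hG hbound

theorem norm_convexCombo_integral_sub_le_of_lipschitz_fderiv {E F : Type*}
    [NormedAddCommGroup E] [NormedSpace ℝ E] [SecondCountableTopology E]
    [MeasurableSpace E] [BorelSpace E] [NormedAddCommGroup F] [NormedSpace ℝ F]
    {π : Measure (E × E)} [IsProbabilityMeasure π] {f : E → F} (hf : Differentiable ℝ f)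
    {s : Set E} (hs : Convex ℝ s) (hsK : IsCompact s) {C : ℝ} (hC0 : 0 ≤ C)
    (hC : ∀ a ∈ s, ∀ b ∈ s, ‖fderiv ℝ f a - fderiv ℝ f b‖ ≤ C * ‖a - b‖)
    {x y : E} (hx : ∀ᵐ q ∂π, x - q.1 ∈ s) (hy : ∀ᵐ q ∂π, y - q.2 ∈ s)
    (hsq : Integrable (fun q => ‖q.1 - q.2‖ ^ 2) π) {l : ℝ} (hl0 : 0 ≤ l) (hl1 : l ≤ 1) :
    ‖(1 - l) • ∫ q, f (x - q.1) ∂π + l • ∫ q, f (y - q.2) ∂π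
        - ∫ q, f ((1 - l) • (x - q.1) + l • (y - q.2)) ∂π‖
      ≤ 2 * C * (l * (1 - l)) * (‖x - y‖ ^ 2 + ∫ q, ‖q.1 - q.2‖ ^ 2 ∂π) := by
  have hint {g : E × E → E} (hg : AEStronglyMeasurable g π) (hgs : ∀ᵐ q ∂π, g q ∈ s) :
      Integrable (fun q => f (g q)) π :=
    hf.continuous.integrable_comp_of_ae_mem_isCompact hsK hg hgs
  have hG : Integrable (fun q => 2 * C * (l * (1 - l)) * (‖x - y‖ ^ 2 + ‖q.1 - q.2‖ ^ 2)) π :=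
    ((integrable_const _).add hsq).const_mul _
  refine (norm_convexCombo_integral_sub_le (hint (by fun_prop) hx) (hint (by fun_prop) hy)
    (hint (by fun_prop) (hx.and hy |>.mono fun q hq => hs hq.1 hq.2 (by linarith) hl0 (by ring)))
    hG l ?_).trans_eq ?_
  · filter_upwards [hx, hy] with q hxq hyq
    exact hs.norm_convexCombo_sub_sub_le_of_lipschitz_fderiv (fun z _ => hf z) hC0 hC hxq hyq
      hl0 hl1
  · rw [integral_const_mul, integral_add (integrable_const _) hsq, integral_const]
    simp

theorem stmt16_general {d : ℕ} (R : ℝ)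
    (H : ℝ → EuclideanSpace ℝ (Fin d) → EuclideanSpace ℝ (Fin d))
    (CK : ℝ → ℝ) (t : ℝ)
    (hH : ContDiff ℝ 1 (H t)) (hCK : 0 ≤ CK t)
    (hlip : ∀ a ∈ closedBall (0 : EuclideanSpace ℝ (Fin d)) (2 * R),
      ∀ b ∈ closedBall (0 : EuclideanSpace ℝ (Fin d)) (2 * R),
        ‖fderiv ℝ (H t) a - fderiv ℝ (H t) b‖ ≤ CK t * ‖a - b‖)
    (μ₁ μ₂ : MeasureTheory.Measure (EuclideanSpace ℝ (Fin d)))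
    (h1 : μ₁ (closedBall 0 R)ᶜ = 0) (h2 : μ₂ (closedBall 0 R)ᶜ = 0)
    (π : MeasureTheory.Measure
      (EuclideanSpace ℝ (Fin d) × EuclideanSpace ℝ (Fin d)))
    [IsProbabilityMeasure π]
    (hf : π.map Prod.fst = μ₁) (hs : π.map Prod.snd = μ₂)
    (x y : EuclideanSpace ℝ (Fin d))
    (hx : x ∈ closedBall (0 : EuclideanSpace ℝ (Fin d)) R)
    (hy : y ∈ closedBall (0 : EuclideanSpace ℝ (Fin d)) R)
    (l : ℝ) (hl : l ∈ Icc (0 : ℝ) 1) :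
    ‖(1 - l) • (∫ z, H t (x - z) ∂μ₁) + l • (∫ z, H t (y - z) ∂μ₂)
        - ∫ z, H t ((1 - l) • x + l • y - z)
            ∂(π.map (fun q => (1 - l) • q.1 + l • q.2))‖
      ≤ 2 * CK t * (l * (1 - l)) * (‖x - y‖ ^ 2 + ∫ q, ‖q.1 - q.2‖ ^ 2 ∂π) := by
  have hsub {a b} (ha : a ∈ closedBall (0 : EuclideanSpace ℝ (Fin d)) R)
      (hb : b ∈ closedBall 0 R) : a - b ∈ closedBall 0 (2 * R) := by
    rw [mem_closedBall_zero_iff] at *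
    linarith [norm_sub_le_of_le ha hb]
  have hB₁ : ∀ᵐ q ∂π, q.1 ∈ closedBall 0 R :=
    ae_of_ae_map measurable_fst.aemeasurable (hf ▸ mem_ae_iff.2 h1)
  have hB₂ : ∀ᵐ q ∂π, q.2 ∈ closedBall 0 R :=
    ae_of_ae_map measurable_snd.aemeasurable (hs ▸ mem_ae_iff.2 h2)
  have hK := isCompact_closedBall (0 : EuclideanSpace ℝ (Fin d)) (2 * R)
  have hsq : Integrable (fun q => ‖q.1 - q.2‖ ^ 2) π :=
    (continuous_norm.pow 2).integrable_comp_of_ae_mem_isCompact hK (by fun_prop)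
      (hB₁.and hB₂ |>.mono fun q hq => hsub hq.1 hq.2)
  have hinterp : ∫ z, H t ((1 - l) • x + l • y - z) ∂(π.map (fun q => (1 - l) • q.1 + l • q.2))
      = ∫ q, H t ((1 - l) • (x - q.1) + l • (y - q.2)) ∂π := by
    rw [integral_map (by fun_prop) (by fun_prop)]
    congr 1 with q : 1
    congr 1
    module
  rw [← hf, ← hs, integral_map (by fun_prop) (by fun_prop),
    integral_map (by fun_prop) (by fun_prop), hinterp]
  exact norm_convexCombo_integral_sub_le_of_lipschitz_fderiv (hH.differentiable one_ne_zero)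
    (convex_closedBall _ _) hK hCK hlip (hB₁.mono fun q => hsub hx) (hB₂.mono fun q => hsub hy)
    hsq hl.1 hl.2

/-- Norm-semiconcavity along interpolating plans of a convolution-type non-local
velocity field `v(t,μ,x) = ∫ H(t, x - z) dμ(z)`. -/
theorem stmt16 {d : ℕ} (T R : ℝ) (hR : 0 < R)
    (H : ℝ → EuclideanSpace ℝ (Fin d) → EuclideanSpace ℝ (Fin d))
    (CK : ℝ → ℝ) (t : ℝ) (ht : t ∈ Icc 0 T)
    (hH : ContDiff ℝ 1 (H t)) (hCK : 0 ≤ CK t)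
    (hlip : ∀ a ∈ closedBall (0 : EuclideanSpace ℝ (Fin d)) (2 * R),
      ∀ b ∈ closedBall (0 : EuclideanSpace ℝ (Fin d)) (2 * R),
        ‖fderiv ℝ (H t) a - fderiv ℝ (H t) b‖ ≤ CK t * ‖a - b‖)
    (μ₁ μ₂ : MeasureTheory.Measure (EuclideanSpace ℝ (Fin d)))
    [IsProbabilityMeasure μ₁] [IsProbabilityMeasure μ₂]
    (h1 : μ₁ (closedBall 0 R)ᶜ = 0) (h2 : μ₂ (closedBall 0 R)ᶜ = 0)
    (π : MeasureTheory.Measure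
      (EuclideanSpace ℝ (Fin d) × EuclideanSpace ℝ (Fin d)))
    [IsProbabilityMeasure π]
    (hf : π.map Prod.fst = μ₁) (hs : π.map Prod.snd = μ₂)
    (x y : EuclideanSpace ℝ (Fin d))
    (hx : x ∈ closedBall (0 : EuclideanSpace ℝ (Fin d)) R)
    (hy : y ∈ closedBall (0 : EuclideanSpace ℝ (Fin d)) R)
    (l : ℝ) (hl : l ∈ Icc (0 : ℝ) 1) :
    ‖(1 - l) • (∫ z, H t (x - z) ∂μ₁) + l • (∫ z, H t (y - z) ∂μ₂)
        - ∫ z, H t ((1 - l) • x + l • y - z)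
            ∂(π.map (fun q => (1 - l) • q.1 + l • q.2))‖
      ≤ 2 * CK t * (l * (1 - l)) * (‖x - y‖ ^ 2 + ∫ q, ‖q.1 - q.2‖ ^ 2 ∂π) :=
  stmt16_general R H CK t hH hCK hlip μ₁ μ₂ h1 h2 π hf hs x y hx hy l hl
end
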